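/- arXiv:1402.6173 — 2 statements merged into one kernel-verified Lean document; each statement's English description precedes it below -/
import Mathlib

section
/- Let η_α, α ∈ I be random variables on a finite index set I, and for each α let B_α ⊆ I with α ∈ B_α. Fix t ∈ ℝ and set λ = Σ_{α∈I} P(η_α > t). If for each α ∈ I, η_α is independent of the family {η_β : β ∉ B_α}, then |P(max_{α∈I} η_α ≤ t) − e^{−λ}| ≤ min(1, λ^{−1})(b₁ + b₂), where b₁ = Σ_{α∈I} Σ_{β∈B_α} P(η_α > t)P(η_β > t) and b₂ = Σ_{α∈I} Σ_{β∈B_α, β≠α} P(η_α > t, η_β > t). -/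
open MeasureTheory ProbabilityTheory Nat

noncomputable def steinF (l : ℝ) : ℕ → ℝ
  | 0 => 0
  | (j+1) => Real.exp (-l) * ∑' m : ℕ, l ^ m * (j ! : ℝ) / ((j + 1 + m)! : ℝ)

lemma steinF_term_nonneg {l : ℝ} (hl : 0 ≤ l) (j m : ℕ) :
    0 ≤ l ^ m * (j ! : ℝ) / ((j + 1 + m)! : ℝ) := by positivity

lemma steinF_summable {l : ℝ} (hl : 0 ≤ l) (j : ℕ) :
    Summable (fun m : ℕ => l ^ m * (j ! : ℝ) / ((j + 1 + m)! : ℝ)) := by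
  refine Summable.of_nonneg_of_le (steinF_term_nonneg hl j) (fun m => ?_)
    (Real.summable_pow_div_factorial l)
  · 
    rw [div_le_div_iff₀ (by positivity) (by positivity)]
    have h1 : (j ! * m ! : ℕ) ≤ (j + 1 + m)! := by
      calc (j ! * m ! : ℕ) ≤ (j + m)! :=
            Nat.le_of_dvd (Nat.factorial_pos _) (Nat.factorial_mul_factorial_dvd_factorial_add j m)
        _ ≤ (j + 1 + m)! := Nat.factorial_le (by omega)
    calc l ^ m * (j ! : ℝ) * (m ! : ℝ) = l ^ m * ((j ! * m ! : ℕ) : ℝ) := by push_cast; ring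
      _ ≤ l ^ m * ((j + 1 + m)! : ℝ) := by
          apply mul_le_mul_of_nonneg_left _ (by positivity)
          exact_mod_cast Nat.cast_le.mpr h1

lemma steinF_nonneg {l : ℝ} (hl : 0 ≤ l) (j : ℕ) : 0 ≤ steinF l j := by
  cases j with
  | zero => simp [steinF]
  | succ j =>
    exact mul_nonneg (Real.exp_nonneg _) (tsum_nonneg (steinF_term_nonneg hl j))

lemma steinF_succ_le {l : ℝ} (hl : 0 ≤ l) (j : ℕ) : steinF l (j + 2) ≤ steinF l (j + 1) := by
  apply mul_le_mul_of_nonneg_left _ (Real.exp_nonneg _)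
  apply Summable.tsum_le_tsum _ (steinF_summable hl (j+1)) (steinF_summable hl j)
  intro m
  rw [div_le_div_iff₀ (by positivity) (by positivity)]
  have h1 : ((j+1)! * (j + 1 + m)! : ℕ) ≤ (j ! * (j + 1 + 1 + m)! : ℕ) := by
    rw [Nat.factorial_succ, show j + 1 + 1 + m = (j + 1 + m) + 1 by omega, Nat.factorial_succ]
    calc (j+1) * j ! * (j+1+m)! = j ! * ((j+1) * (j+1+m)!) := by ring
      _ ≤ j ! * ((j+1+m+1) * (j+1+m)!) := by
          exact Nat.mul_le_mul_left _ (Nat.mul_le_mul_right _ (by omega))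
  calc l ^ m * ((j+1)! : ℝ) * ((j+1+m)! : ℝ) = l ^ m * (((j+1)! * (j+1+m)! : ℕ) : ℝ) := by
        push_cast; ring
    _ ≤ l ^ m * ((j ! * (j+1+1+m)! : ℕ) : ℝ) := by
        apply mul_le_mul_of_nonneg_left _ (by positivity)
        exact_mod_cast Nat.cast_le.mpr h1
    _ = l ^ m * (j ! : ℝ) * ((j+1+1+m)! : ℝ) := by push_cast; ring

lemma steinF_mono {l : ℝ} (hl : 0 ≤ l) {a b : ℕ} (h1 : 1 ≤ b) (hba : b ≤ a) :
    steinF l a ≤ steinF l b := by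
  induction a, hba using Nat.le_induction with
  | base => exact le_refl _
  | succ n hn ih =>
    refine le_trans ?_ ih
    obtain ⟨j, rfl⟩ : ∃ j, n = j + 1 := ⟨n - 1, by omega⟩
    exact steinF_succ_le hl j

lemma Real.exp_eq_tsum' (x : ℝ) : Real.exp x = ∑' n : ℕ, x ^ n / (n ! : ℝ) := by
  rw [Real.exp_eq_exp_ℝ]
  exact congrFun NormedSpace.exp_eq_tsum_div x

lemma steinF_one {l : ℝ} (hl : 0 < l) : steinF l 1 = (1 - Real.exp (-l)) / l := by
  have hsum : Summable (fun n : ℕ => l ^ n / (n ! : ℝ)) := Real.summable_pow_div_factorial l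
  have hexp : Real.exp l = 1 + ∑' m : ℕ, l ^ (m+1) / ((m+1)! : ℝ) := by
    rw [Real.exp_eq_tsum' l, Summable.tsum_eq_zero_add hsum]
    simp
  have key : l * ∑' m : ℕ, l ^ m * ((0:ℕ)! : ℝ) / ((0 + 1 + m)! : ℝ) = Real.exp l - 1 := by
    rw [← tsum_mul_left]
    have h2 : ∀ m : ℕ, l * (l ^ m * ((0:ℕ)! : ℝ) / ((0 + 1 + m)! : ℝ))
        = l ^ (m+1) / ((m+1)! : ℝ) := by
      intro m
      rw [show 0 + 1 + m = m + 1 from by omega, pow_succ]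
      norm_num
      ring
    rw [tsum_congr h2]
    linarith [hexp]
  have h3 : (∑' m : ℕ, l ^ m * ((0:ℕ)! : ℝ) / ((0 + 1 + m)! : ℝ)) = (Real.exp l - 1) / l := by
    rw [eq_div_iff hl.ne']
    linarith [key]
  show Real.exp (-l) * _ = _
  rw [h3, Real.exp_neg]
  have hE := (Real.exp_pos l).ne'
  field_simp

lemma steinF_equation {l : ℝ} (hl : 0 < l) (w : ℕ) :
    l * steinF l (w + 1) - (w : ℝ) * steinF l w
      = (if w = 0 then (1:ℝ) else 0) - Real.exp (-l) := by
  cases w with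
  | zero =>
    simp [steinF_one hl]
    field_simp
  | succ j =>
    simp only [if_neg (Nat.succ_ne_zero j), Nat.cast_succ]
    have e2 : steinF l (j+1) = Real.exp (-l) * ∑' m : ℕ, l ^ m * (j ! : ℝ) / ((j + 1 + m)! : ℝ) :=
      rfl
    have e1 : steinF l (j+1+1)
        = Real.exp (-l) * ∑' m : ℕ, l ^ m * ((j+1)! : ℝ) / ((j + 1 + 1 + m)! : ℝ) := rfl
    have hsumh : Summable (fun m : ℕ => l ^ m * (((j+1))! : ℝ) / ((j + 1 + m)! : ℝ)) := by
      have h := (steinF_summable hl.le j).mul_left ((j:ℝ)+1)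
      refine h.congr fun m => ?_
      rw [Nat.factorial_succ]
      push_cast
      ring
    have hshift : (∑' m : ℕ, l ^ m * (((j+1))! : ℝ) / ((j + 1 + m)! : ℝ))
        = 1 + l * ∑' m : ℕ, l ^ m * (((j+1))! : ℝ) / ((j + 1 + 1 + m)! : ℝ) := by
      rw [Summable.tsum_eq_zero_add hsumh]
      congr 1
      · simp only [pow_zero, one_mul, Nat.add_zero]
        exact div_self (Nat.cast_ne_zero.mpr (Nat.factorial_pos _).ne')
      · rw [← tsum_mul_left]
        congr 1
        funext m
        rw [show j + 1 + (m+1) = j + 1 + 1 + m from by omega, pow_succ]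
        ring
    have hA : ((j:ℝ)+1) * ∑' m : ℕ, l ^ m * (j ! : ℝ) / ((j + 1 + m)! : ℝ)
        = ∑' m : ℕ, l ^ m * ((j+1)! : ℝ) / ((j + 1 + m)! : ℝ) := by
      rw [← tsum_mul_left]
      congr 1
      funext m
      rw [Nat.factorial_succ]
      push_cast
      ring
    rw [e1, e2]
    linear_combination (-Real.exp (-l)) * hA + (-Real.exp (-l)) * hshift

lemma steinF_one_le {l : ℝ} (hl : 0 < l) : steinF l 1 ≤ min 1 l⁻¹ := by
  rw [steinF_one hl]
  apply le_min
  · rw [div_le_one hl]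
    have := Real.add_one_le_exp (-l)
    linarith
  · rw [div_le_iff₀ hl, inv_mul_cancel₀ hl.ne']
    have := Real.exp_nonneg (-l)
    linarith

lemma steinF_abs_sub_le {l : ℝ} (hl : 0 < l) {a b : ℕ} (h1 : 1 ≤ b) (hba : b ≤ a) :
    |steinF l a - steinF l b| ≤ min 1 l⁻¹ * ((a:ℝ) - (b:ℝ)) := by
  have hε0 : 0 ≤ min 1 l⁻¹ := le_min zero_le_one (by positivity)
  rcases eq_or_lt_of_le hba with rfl | hlt
  · simp
  · have h2 : steinF l a ≤ steinF l b := steinF_mono hl.le h1 hba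
    rw [abs_sub_comm, abs_of_nonneg (by linarith)]
    have h3 : steinF l b ≤ min 1 l⁻¹ :=
      le_trans (steinF_mono hl.le (le_refl 1) h1) (steinF_one_le hl)
    have h4 : 0 ≤ steinF l a := steinF_nonneg hl.le a
    have h5 : (1:ℝ) ≤ (a:ℝ) - (b:ℝ) := by
      have : b + 1 ≤ a := hlt
      have := Nat.cast_le (α := ℝ).mpr this
      push_cast at this
      linarith
    calc steinF l b - steinF l a ≤ min 1 l⁻¹ := by linarith
      _ = min 1 l⁻¹ * 1 := (mul_one _).symm
      _ ≤ min 1 l⁻¹ * ((a:ℝ) - (b:ℝ)) := mul_le_mul_of_nonneg_left h5 hε0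

lemma steinF_zero (l : ℝ) : steinF l 0 = 0 := rfl

theorem stein_chen_poisson_approx
    {Ω : Type*} [MeasurableSpace Ω] (μ : Measure Ω) [IsProbabilityMeasure μ]
    {I : Type*} [Fintype I] [Nonempty I] [DecidableEq I]
    (η : I → Ω → ℝ) (hmeas : ∀ α, Measurable (η α))
    (B : I → Finset I) (hB : ∀ α, α ∈ B α)
    (t : ℝ)
    (lam : ℝ) (hlam : lam = ∑ α : I, (μ {ω | η α ω > t}).toReal)
    (hindep : ∀ α : I,
      IndepFun (η α) (fun ω => fun β : {β : I // β ∉ B α} => η β ω) μ)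
    (b₁ b₂ : ℝ)
    (hb₁ : b₁ = ∑ α : I, ∑ β ∈ B α,
        (μ {ω | η α ω > t}).toReal * (μ {ω | η β ω > t}).toReal)
    (hb₂ : b₂ = ∑ α : I, ∑ β ∈ (B α).erase α,
        (μ {ω | η α ω > t ∧ η β ω > t}).toReal) :
    |(μ {ω | ∀ α : I, η α ω ≤ t}).toReal - Real.exp (-lam)|
      ≤ min 1 lam⁻¹ * (b₁ + b₂) := by
  classical
  set p : I → ℝ := fun α => (μ {ω | η α ω > t}).toReal with hpdef
  have hp0 : ∀ α, 0 ≤ p α := fun α => ENNReal.toReal_nonneg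
  have hlam0 : 0 ≤ lam := hlam ▸ Finset.sum_nonneg fun α _ => hp0 α
  set A : I → Set Ω := fun α => {ω | t < η α ω} with hAdef
  have hAm : ∀ α, MeasurableSet (A α) := fun α => measurableSet_lt measurable_const (hmeas α)
  rcases eq_or_lt_of_le hlam0 with h0 | hl
  · -- lam = 0
    have hall : ∀ α : I, μ (A α) = 0 := by
      intro α
      have h1 : p α = 0 := by
        have := (Finset.sum_eq_zero_iff_of_nonneg (fun α _ => hp0 α)).mp (hlam ▸ h0.symm)
        exact this α (Finset.mem_univ α)
      have h2 : μ (A α) ≠ ⊤ := measure_ne_top μ _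
      exact (ENNReal.toReal_eq_zero_iff _).mp h1 |>.resolve_right h2
    have hone : μ {ω | ∀ α : I, η α ω ≤ t} = 1 := by
      have hcompl : {ω | ∀ α : I, η α ω ≤ t} = (⋃ α : I, A α)ᶜ := by
        ext ω; simp [hAdef, not_lt]
      rw [hcompl, measure_compl (MeasurableSet.iUnion fun α => hAm α) (measure_ne_top μ _),
        measure_univ, measure_iUnion_null hall, tsub_zero]
    rw [hone, ← h0]
    norm_num
  · -- main case
    set ε := min 1 lam⁻¹ with hεdef
    have hε0 : (0:ℝ) ≤ ε := le_min zero_le_one (by positivity)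
    set X : I → Ω → ℕ := fun α ω => if t < η α ω then 1 else 0 with hXdef
    set Xr : I → Ω → ℝ := fun α ω => if t < η α ω then 1 else 0 with hXrdef
    set W : Ω → ℕ := fun ω => ∑ α : I, X α ω with hWdef
    set Z : I → Ω → ℕ := fun α ω => ∑ β ∈ (B α).erase α, X β ω with hZdef
    set Y : I → Ω → ℕ := fun α ω => ∑ β : {β : I // β ∉ B α}, X (↑β) ω with hYdef
    have hXm : ∀ α, Measurable (X α) := fun α =>
      Measurable.ite (hAm α) measurable_const measurable_const
    have hXrm : ∀ α, Measurable (Xr α) := fun α =>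
      Measurable.ite (hAm α) measurable_const measurable_const
    have hXr01 : ∀ α ω, 0 ≤ Xr α ω ∧ Xr α ω ≤ 1 := by
      intro α ω
      by_cases h : t < η α ω <;> simp [hXrdef, h]
    have hXrX : ∀ α ω, ((X α ω : ℝ)) = Xr α ω := by
      intro α ω
      by_cases h : t < η α ω <;> simp [hXrdef, hXdef, h]
    have hWm : Measurable W := Finset.measurable_sum _ fun α _ => hXm α
    have hZm : ∀ α, Measurable (Z α) := fun α => Finset.measurable_sum _ fun β _ => hXm β
    have hYm : ∀ α, Measurable (Y α) := fun α => Finset.measurable_sum _ fun β _ => hXm β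
    have hWsplit : ∀ α ω, W ω = X α ω + Z α ω + Y α ω := by
      intro α ω
      have h1 : Y α ω = ∑ β ∈ (B α)ᶜ, X β ω := by
        rw [hYdef]
        exact (Finset.sum_subtype ((B α)ᶜ) (fun β => Finset.mem_compl) fun β => X β ω).symm
      have h2 : ∑ β ∈ B α, X β ω = X α ω + Z α ω := by
        show _ = X α ω + ∑ β ∈ (B α).erase α, X β ω
        exact (Finset.add_sum_erase (B α) (fun β => X β ω) (hB α)).symm
      calc W ω = ∑ β ∈ B α, X β ω + ∑ β ∈ (B α)ᶜ, X β ω :=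
            (Finset.sum_add_sum_compl (B α) _).symm
        _ = X α ω + Z α ω + Y α ω := by rw [h1, h2]
    -- integrability helper
    have hInt : ∀ (g : Ω → ℝ) (C : ℝ), Measurable g → (∀ ω, |g ω| ≤ C) → Integrable g μ := by
      intro g C hg hC
      exact (integrable_const C).mono' hg.aestronglyMeasurable
        (Filter.Eventually.of_forall fun ω => by simpa [Real.norm_eq_abs] using hC ω)
    set M := steinF lam 1 with hMdef
    have hf0 : ∀ j, 0 ≤ steinF lam j := steinF_nonneg hl.le
    have hM0 : 0 ≤ M := hMdef ▸ hf0 1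
    have hfub : ∀ j : ℕ, steinF lam j ≤ M := by
      intro j
      cases j with
      | zero => rw [steinF_zero]; exact hM0
      | succ j => exact hMdef ▸ steinF_mono hl.le (le_refl 1) (Nat.succ_le_succ (Nat.zero_le j))
    have hfabs : ∀ (g : Ω → ℕ) (ω : Ω), |steinF lam (g ω)| ≤ M := fun g ω =>
      abs_le.mpr ⟨by linarith [hf0 (g ω)], hfub _⟩
    have hIntf : ∀ (g : Ω → ℕ), Measurable g → Integrable (fun ω => steinF lam (g ω)) μ :=
      fun g hg => hInt _ M ((measurable_from_nat (f := steinF lam)).comp hg) (hfabs g)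
    -- integral of indicators
    have hXr_ind : ∀ α, Xr α = Set.indicator (A α) (fun _ => (1:ℝ)) := by
      intro α
      funext ω
      by_cases h : ω ∈ A α
      · rw [Set.indicator_of_mem h]; exact if_pos h
      · rw [Set.indicator_of_notMem h]; exact if_neg h
    have hintXr : ∀ α, ∫ ω, Xr α ω ∂μ = p α := by
      intro α
      rw [show (fun ω => Xr α ω) = Xr α from rfl, hXr_ind α, integral_indicator (hAm α),
        setIntegral_const, smul_eq_mul, mul_one, measureReal_def]
    have hintXrXr : ∀ α β, ∫ ω, Xr α ω * Xr β ω ∂μ = (μ (A α ∩ A β)).toReal := by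
      intro α β
      have h1 : (fun ω => Xr α ω * Xr β ω) = Set.indicator (A α ∩ A β) (fun _ => (1:ℝ)) := by
        funext ω
        rw [hXr_ind α, hXr_ind β]
        by_cases h1 : ω ∈ A α <;> by_cases h2 : ω ∈ A β <;>
          simp [Set.indicator_apply, h1, h2]
      rw [h1, integral_indicator ((hAm α).inter (hAm β)), setIntegral_const, smul_eq_mul, mul_one,
        measureReal_def]
    -- integrability of basic pieces
    have hIXr : ∀ α, Integrable (Xr α) μ := fun α =>
      hInt _ 1 (hXrm α) fun ω => abs_le.mpr ⟨by linarith [(hXr01 α ω).1], (hXr01 α ω).2⟩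
    have habs_int : ∀ (g : Ω → ℝ), Integrable g μ → |∫ ω, g ω ∂μ| ≤ ∫ ω, |g ω| ∂μ := by
      intro g _
      simpa [Real.norm_eq_abs] using norm_integral_le_integral_norm (μ := μ) g
    -- Step A
    have hsetW : {ω | ∀ α : I, η α ω ≤ t} = {ω | W ω = 0} := by
      ext ω
      constructor
      · intro h
        show W ω = 0
        exact Finset.sum_eq_zero fun α _ => if_neg (not_lt.mpr (h α))
      · intro h α
        have h2 : X α ω = 0 := Finset.sum_eq_zero_iff.mp h α (Finset.mem_univ α)
        by_contra hc
        have h3 : X α ω = 1 := if_pos (not_le.mp hc)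
        rw [h3] at h2
        exact one_ne_zero h2
    have hW0m : MeasurableSet {ω | W ω = 0} := hWm (measurableSet_singleton 0)
    have stepA : (μ {ω | ∀ α : I, η α ω ≤ t}).toReal - Real.exp (-lam)
        = ∫ ω, (lam * steinF lam (W ω + 1) - (W ω : ℝ) * steinF lam (W ω)) ∂μ := by
      have hpt : ∀ ω, lam * steinF lam (W ω + 1) - (W ω : ℝ) * steinF lam (W ω)
          = Set.indicator {ω' | W ω' = 0} (fun _ => (1:ℝ)) ω - Real.exp (-lam) := by
        intro ω
        rw [steinF_equation hl (W ω)]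
        congr 1
        by_cases h : W ω = 0 <;> simp [Set.indicator_apply, h]
      rw [show (fun ω => lam * steinF lam (W ω + 1) - (W ω : ℝ) * steinF lam (W ω))
            = fun ω => Set.indicator {ω' | W ω' = 0} (fun _ => (1:ℝ)) ω - Real.exp (-lam)
          from funext hpt]
      rw [integral_sub ((integrable_const (1:ℝ)).indicator hW0m) (integrable_const _),
        integral_indicator hW0m, setIntegral_const, integral_const]
      simp [hsetW, measureReal_def]
    -- Step B
    set Hf : I → Ω → ℝ := fun α ω => p α * steinF lam (W ω + 1) - Xr α ω * steinF lam (W ω)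
      with hHdef
    have hWr : ∀ ω, ((W ω : ℝ)) = ∑ α : I, Xr α ω := by
      intro ω
      show ((∑ α : I, X α ω : ℕ) : ℝ) = _
      push_cast
      exact Finset.sum_congr rfl fun α _ => hXrX α ω
    have hIntH : ∀ α, Integrable (Hf α) μ := by
      intro α
      apply hInt _ (p α * M + M)
      · exact (((measurable_from_nat (f := steinF lam)).comp (hWm.add_const 1)).const_mul (p α)).sub
          ((hXrm α).mul ((measurable_from_nat (f := steinF lam)).comp hWm))
      · intro ω
        have h1 : |p α * steinF lam (W ω + 1)| ≤ p α * M := by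
          rw [abs_mul, abs_of_nonneg (hp0 α)]
          exact mul_le_mul_of_nonneg_left
            (by rw [abs_of_nonneg (hf0 _)]; exact hfub _) (hp0 α)
        have h2 : |Xr α ω * steinF lam (W ω)| ≤ M := by
          rw [abs_mul]
          calc |Xr α ω| * |steinF lam (W ω)| ≤ 1 * M :=
                mul_le_mul (by rw [abs_of_nonneg (hXr01 α ω).1]; exact (hXr01 α ω).2)
                  (hfabs W ω) (abs_nonneg _) zero_le_one
            _ = M := one_mul M
        calc |Hf α ω| ≤ |p α * steinF lam (W ω + 1)| + |Xr α ω * steinF lam (W ω)| :=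
              abs_sub _ _
          _ ≤ p α * M + M := add_le_add h1 h2
    have stepB : ∫ ω, (lam * steinF lam (W ω + 1) - (W ω : ℝ) * steinF lam (W ω)) ∂μ
        = ∑ α : I, ∫ ω, Hf α ω ∂μ := by
      rw [← integral_finset_sum Finset.univ fun α _ => hIntH α]
      refine integral_congr_ae (Filter.Eventually.of_forall fun ω => ?_)
      have hs : ∑ α : I, Hf α ω
          = (∑ α : I, p α) * steinF lam (W ω + 1) - (∑ α : I, Xr α ω) * steinF lam (W ω) := by
        rw [Finset.sum_mul, Finset.sum_mul, ← Finset.sum_sub_distrib]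
      have hlam' : lam = ∑ α : I, p α := hlam
      show lam * steinF lam (W ω + 1) - (W ω : ℝ) * steinF lam (W ω) = ∑ α : I, Hf α ω
      rw [hs, ← hWr ω, ← hlam']
    -- replacement inside product with X α
    have hXrf : ∀ (α : I) (ω : Ω) (g : ℕ → ℝ), Xr α ω * g (W ω) = Xr α ω * g (1 + Z α ω + Y α ω) := by
      intro α ω g
      by_cases h : t < η α ω
      · have hx : X α ω = 1 := if_pos h
        have hw : W ω = 1 + Z α ω + Y α ω := by rw [hWsplit α ω, hx]
        rw [hw]
      · have hx : Xr α ω = 0 := if_neg h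
        rw [hx]
        simp
    -- independence
    have hindXY : ∀ α, IndepFun (Xr α) (fun ω => steinF lam (1 + Y α ω)) μ := by
      intro α
      have hφ : Measurable (fun x : ℝ => if t < x then (1:ℝ) else 0) :=
        Measurable.ite measurableSet_Ioi measurable_const measurable_const
      have hψ : Measurable (fun v : {β : I // β ∉ B α} → ℝ =>
          steinF lam (1 + ∑ β : {β : I // β ∉ B α}, if t < v β then (1:ℕ) else 0)) := by
        apply (measurable_from_nat (f := steinF lam)).comp
        apply Measurable.add measurable_const
        apply Finset.measurable_sum
        intro β _
        exact Measurable.ite ((measurable_pi_apply β) measurableSet_Ioi) measurable_const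
          measurable_const
      exact (hindep α).comp hφ hψ
    have hindProd : ∀ α, ∫ ω, Xr α ω * steinF lam (1 + Y α ω) ∂μ
        = p α * ∫ ω, steinF lam (1 + Y α ω) ∂μ := by
      intro α
      have h1 := (hindXY α).integral_mul_eq_mul_integral (hXrm α).aestronglyMeasurable
        (((measurable_from_nat (f := steinF lam)).comp ((hYm α).const_add 1)).aestronglyMeasurable)
      rw [← hintXr α]
      exact h1
    -- integrable pieces for Step C
    have hIA : ∀ α, Integrable (fun ω => steinF lam (W ω + 1) - steinF lam (1 + Y α ω)) μ :=
      fun α => (hIntf _ (hWm.add_const 1)).sub (hIntf _ ((hYm α).const_add 1))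
    have hIB : ∀ α, Integrable
        (fun ω => Xr α ω * (steinF lam (1 + Z α ω + Y α ω) - steinF lam (1 + Y α ω))) μ := by
      intro α
      apply hInt _ (M + M)
      · exact (hXrm α).mul
          (((measurable_from_nat (f := steinF lam)).comp (((hZm α).const_add 1).add (hYm α))).sub
            ((measurable_from_nat (f := steinF lam)).comp ((hYm α).const_add 1)))
      · intro ω
        rw [abs_mul]
        calc |Xr α ω| * |steinF lam (1 + Z α ω + Y α ω) - steinF lam (1 + Y α ω)|
            ≤ 1 * (M + M) := by
              apply mul_le_mul (by rw [abs_of_nonneg (hXr01 α ω).1]; exact (hXr01 α ω).2)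
                _ (abs_nonneg _) zero_le_one
              calc |steinF lam (1 + Z α ω + Y α ω) - steinF lam (1 + Y α ω)|
                  ≤ |steinF lam (1 + Z α ω + Y α ω)| + |steinF lam (1 + Y α ω)| := abs_sub _ _
                _ ≤ M + M := add_le_add (hfabs (fun ω => 1 + Z α ω + Y α ω) ω)
                    (hfabs (fun ω => 1 + Y α ω) ω)
          _ = M + M := one_mul _
    have hIC : ∀ α, Integrable (fun ω => steinF lam (1 + Y α ω)) μ :=
      fun α => hIntf _ ((hYm α).const_add 1)
    have hIC' : ∀ α, Integrable (fun ω => Xr α ω * steinF lam (1 + Y α ω)) μ := by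
      intro α
      apply hInt _ M ((hXrm α).mul ((measurable_from_nat (f := steinF lam)).comp ((hYm α).const_add 1)))
      intro ω
      show |Xr α ω * steinF lam (1 + Y α ω)| ≤ M
      rw [abs_mul]
      calc |Xr α ω| * |steinF lam (1 + Y α ω)| ≤ 1 * M :=
            mul_le_mul (by rw [abs_of_nonneg (hXr01 α ω).1]; exact (hXr01 α ω).2)
              (hfabs (fun ω => 1 + Y α ω) ω) (abs_nonneg _) zero_le_one
        _ = M := one_mul M
    -- Step C
    have stepC : ∀ α, ∫ ω, Hf α ω ∂μ
        = p α * ∫ ω, (steinF lam (W ω + 1) - steinF lam (1 + Y α ω)) ∂μ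
          - ∫ ω, Xr α ω * (steinF lam (1 + Z α ω + Y α ω) - steinF lam (1 + Y α ω)) ∂μ := by
      intro α
      have e : ∀ ω, Hf α ω
          = p α * (steinF lam (W ω + 1) - steinF lam (1 + Y α ω))
            - Xr α ω * (steinF lam (1 + Z α ω + Y α ω) - steinF lam (1 + Y α ω))
            + (p α * steinF lam (1 + Y α ω) - Xr α ω * steinF lam (1 + Y α ω)) := by
        intro ω
        show p α * steinF lam (W ω + 1) - Xr α ω * steinF lam (W ω) = _
        rw [hXrf α ω (steinF lam)]
        ring
      have h4 : ∫ ω, (p α * (steinF lam (W ω + 1) - steinF lam (1 + Y α ω))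
            - Xr α ω * (steinF lam (1 + Z α ω + Y α ω) - steinF lam (1 + Y α ω))
            + (p α * steinF lam (1 + Y α ω) - Xr α ω * steinF lam (1 + Y α ω))) ∂μ
          = ∫ ω, (p α * (steinF lam (W ω + 1) - steinF lam (1 + Y α ω))
            - Xr α ω * (steinF lam (1 + Z α ω + Y α ω) - steinF lam (1 + Y α ω))) ∂μ
            + ∫ ω, (p α * steinF lam (1 + Y α ω) - Xr α ω * steinF lam (1 + Y α ω)) ∂μ :=
        integral_add (((hIA α).const_mul (p α)).sub (hIB α))
          (((hIC α).const_mul (p α)).sub (hIC' α))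
      have h5 : ∫ ω, (p α * (steinF lam (W ω + 1) - steinF lam (1 + Y α ω))
            - Xr α ω * (steinF lam (1 + Z α ω + Y α ω) - steinF lam (1 + Y α ω))) ∂μ
          = ∫ ω, p α * (steinF lam (W ω + 1) - steinF lam (1 + Y α ω)) ∂μ
            - ∫ ω, Xr α ω * (steinF lam (1 + Z α ω + Y α ω) - steinF lam (1 + Y α ω)) ∂μ :=
        integral_sub ((hIA α).const_mul (p α)) (hIB α)
      have h6 : ∫ ω, (p α * steinF lam (1 + Y α ω) - Xr α ω * steinF lam (1 + Y α ω)) ∂μ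
          = ∫ ω, p α * steinF lam (1 + Y α ω) ∂μ - ∫ ω, Xr α ω * steinF lam (1 + Y α ω) ∂μ :=
        integral_sub ((hIC α).const_mul (p α)) (hIC' α)
      have h7 : ∫ ω, p α * (steinF lam (W ω + 1) - steinF lam (1 + Y α ω)) ∂μ
          = p α * ∫ ω, (steinF lam (W ω + 1) - steinF lam (1 + Y α ω)) ∂μ :=
        integral_const_mul (p α) _
      have h8 : ∫ ω, p α * steinF lam (1 + Y α ω) ∂μ = p α * ∫ ω, steinF lam (1 + Y α ω) ∂μ :=
        integral_const_mul (p α) _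
      rw [integral_congr_ae (Filter.Eventually.of_forall e), h4, h5, h6, h7, h8, hindProd α]
      ring
    -- cast of Z
    have hZr : ∀ α ω, ((Z α ω : ℝ)) = ∑ β ∈ (B α).erase α, Xr β ω := by
      intro α ω
      show ((∑ β ∈ (B α).erase α, X β ω : ℕ) : ℝ) = _
      push_cast
      exact Finset.sum_congr rfl fun β _ => hXrX β ω
    -- bound 1
    have bnd1 : ∀ α, |∫ ω, (steinF lam (W ω + 1) - steinF lam (1 + Y α ω)) ∂μ|
        ≤ ε * (p α + ∑ β ∈ (B α).erase α, p β) := by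
      intro α
      have hIR : Integrable (fun ω => ε * (Xr α ω + ∑ β ∈ (B α).erase α, Xr β ω)) μ :=
        (((hIXr α).add (integrable_finset_sum _ fun β _ => hIXr β)).const_mul ε)
      calc |∫ ω, (steinF lam (W ω + 1) - steinF lam (1 + Y α ω)) ∂μ|
          ≤ ∫ ω, |steinF lam (W ω + 1) - steinF lam (1 + Y α ω)| ∂μ := habs_int _ (hIA α)
        _ ≤ ∫ ω, ε * (Xr α ω + ∑ β ∈ (B α).erase α, Xr β ω) ∂μ := by
            apply integral_mono (hIA α).abs hIR
            intro ω
            have hba : 1 + Y α ω ≤ W ω + 1 := by rw [hWsplit α ω]; omega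
            have hle := steinF_abs_sub_le hl (Nat.le_add_right 1 (Y α ω)) hba
            have hcast : ((W ω + 1 : ℕ) : ℝ) - ((1 + Y α ω : ℕ) : ℝ)
                = Xr α ω + ∑ β ∈ (B α).erase α, Xr β ω := by
              rw [hWsplit α ω]
              push_cast
              rw [hXrX α ω, hZr α ω]
              ring
            calc |steinF lam (W ω + 1) - steinF lam (1 + Y α ω)|
                ≤ min 1 lam⁻¹ * (((W ω + 1 : ℕ) : ℝ) - ((1 + Y α ω : ℕ) : ℝ)) := hle
              _ = ε * (Xr α ω + ∑ β ∈ (B α).erase α, Xr β ω) := by rw [hcast, hεdef]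
        _ = ε * (p α + ∑ β ∈ (B α).erase α, p β) := by
            rw [integral_const_mul,
              integral_add (hIXr α) (integrable_finset_sum _ fun β _ => hIXr β), hintXr α,
              integral_finset_sum _ fun β _ => hIXr β]
            congr 1
            rw [Finset.sum_congr rfl fun β _ => hintXr β]
    -- bound 2
    have hIXrXr : ∀ α β, Integrable (fun ω => Xr α ω * Xr β ω) μ := by
      intro α β
      apply hInt _ 1 ((hXrm α).mul (hXrm β))
      intro ω
      show |Xr α ω * Xr β ω| ≤ 1
      rw [abs_mul]
      calc |Xr α ω| * |Xr β ω| ≤ 1 * 1 :=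
            mul_le_mul (by rw [abs_of_nonneg (hXr01 α ω).1]; exact (hXr01 α ω).2)
              (by rw [abs_of_nonneg (hXr01 β ω).1]; exact (hXr01 β ω).2)
              (abs_nonneg _) zero_le_one
        _ = 1 := one_mul 1
    have bnd2 : ∀ α, |∫ ω, Xr α ω * (steinF lam (1 + Z α ω + Y α ω) - steinF lam (1 + Y α ω)) ∂μ|
        ≤ ε * ∑ β ∈ (B α).erase α, (μ (A α ∩ A β)).toReal := by
      intro α
      have hIR : Integrable (fun ω => ε * ∑ β ∈ (B α).erase α, Xr α ω * Xr β ω) μ :=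
        ((integrable_finset_sum _ fun β _ => hIXrXr α β).const_mul ε)
      calc |∫ ω, Xr α ω * (steinF lam (1 + Z α ω + Y α ω) - steinF lam (1 + Y α ω)) ∂μ|
          ≤ ∫ ω, |Xr α ω * (steinF lam (1 + Z α ω + Y α ω) - steinF lam (1 + Y α ω))| ∂μ :=
            habs_int _ (hIB α)
        _ ≤ ∫ ω, ε * ∑ β ∈ (B α).erase α, Xr α ω * Xr β ω ∂μ := by
            apply integral_mono (hIB α).abs hIR
            intro ω
            have hba : 1 + Y α ω ≤ 1 + Z α ω + Y α ω := by omega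
            have hle := steinF_abs_sub_le hl (Nat.le_add_right 1 (Y α ω)) hba
            have hcast : ((1 + Z α ω + Y α ω : ℕ) : ℝ) - ((1 + Y α ω : ℕ) : ℝ) = (Z α ω : ℝ) := by
              push_cast
              ring
            show |Xr α ω * (steinF lam (1 + Z α ω + Y α ω) - steinF lam (1 + Y α ω))|
              ≤ ε * ∑ β ∈ (B α).erase α, Xr α ω * Xr β ω
            rw [abs_mul, abs_of_nonneg (hXr01 α ω).1]
            calc Xr α ω * |steinF lam (1 + Z α ω + Y α ω) - steinF lam (1 + Y α ω)|
                ≤ Xr α ω * (ε * (Z α ω : ℝ)) := by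
                  apply mul_le_mul_of_nonneg_left _ (hXr01 α ω).1
                  calc |steinF lam (1 + Z α ω + Y α ω) - steinF lam (1 + Y α ω)|
                      ≤ min 1 lam⁻¹ * (((1 + Z α ω + Y α ω : ℕ) : ℝ) - ((1 + Y α ω : ℕ) : ℝ)) :=
                        hle
                    _ = ε * (Z α ω : ℝ) := by rw [hcast, hεdef]
              _ = ε * ∑ β ∈ (B α).erase α, Xr α ω * Xr β ω := by
                  rw [hZr α ω,
                    show Xr α ω * (ε * ∑ β ∈ (B α).erase α, Xr β ω)
                      = ε * (Xr α ω * ∑ β ∈ (B α).erase α, Xr β ω) from by ring,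
                    Finset.mul_sum]
        _ = ε * ∑ β ∈ (B α).erase α, (μ (A α ∩ A β)).toReal := by
            rw [integral_const_mul, integral_finset_sum _ fun β _ => hIXrXr α β]
            congr 1
            exact Finset.sum_congr rfl fun β _ => hintXrXr α β
    -- assembly
    have hsum1 : ∀ α, p α * (p α + ∑ β ∈ (B α).erase α, p β) = ∑ β ∈ B α, p α * p β := by
      intro α
      rw [Finset.add_sum_erase (B α) p (hB α), Finset.mul_sum]
    calc |(μ {ω | ∀ α : I, η α ω ≤ t}).toReal - Real.exp (-lam)|
        = |∑ α : I, ∫ ω, Hf α ω ∂μ| := by rw [stepA, stepB]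
      _ ≤ ∑ α : I, |∫ ω, Hf α ω ∂μ| := Finset.abs_sum_le_sum_abs _ _
      _ ≤ ∑ α : I, (ε * ∑ β ∈ B α, p α * p β
            + ε * ∑ β ∈ (B α).erase α, (μ (A α ∩ A β)).toReal) := by
          apply Finset.sum_le_sum
          intro α _
          rw [stepC α]
          calc |p α * ∫ ω, (steinF lam (W ω + 1) - steinF lam (1 + Y α ω)) ∂μ
                - ∫ ω, Xr α ω * (steinF lam (1 + Z α ω + Y α ω) - steinF lam (1 + Y α ω)) ∂μ|
              ≤ |p α * ∫ ω, (steinF lam (W ω + 1) - steinF lam (1 + Y α ω)) ∂μ|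
                + |∫ ω, Xr α ω * (steinF lam (1 + Z α ω + Y α ω) - steinF lam (1 + Y α ω)) ∂μ| :=
                abs_sub _ _
            _ = p α * |∫ ω, (steinF lam (W ω + 1) - steinF lam (1 + Y α ω)) ∂μ|
                + |∫ ω, Xr α ω * (steinF lam (1 + Z α ω + Y α ω) - steinF lam (1 + Y α ω)) ∂μ| := by
                rw [abs_mul, abs_of_nonneg (hp0 α)]
            _ ≤ p α * (ε * (p α + ∑ β ∈ (B α).erase α, p β))
                + ε * ∑ β ∈ (B α).erase α, (μ (A α ∩ A β)).toReal :=
                add_le_add (mul_le_mul_of_nonneg_left (bnd1 α) (hp0 α)) (bnd2 α)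
            _ = ε * ∑ β ∈ B α, p α * p β
                + ε * ∑ β ∈ (B α).erase α, (μ (A α ∩ A β)).toReal := by
                rw [← hsum1 α]
                ring
      _ = ε * (b₁ + b₂) := by
          rw [Finset.sum_add_distrib, ← Finset.mul_sum, ← Finset.mul_sum, ← mul_add, hb₁, hb₂]
          rfl
end

section
/- Let x be a real random variable and suppose there exist C₀ > 0 and β ∈ (0,1] such that for every sequence p = p_n → ∞ with log p = o(n^β), one has p^{1/2} P(|x| > C₀ (n log p)^{1/4}) → 0 as n → ∞. Then E[exp(t₀ |x|^{4β/(1+β)})] < ∞ for some t₀ > 0. -/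
open MeasureTheory Filter


lemma partA {Ω : Type*} [MeasurableSpace Ω] (μ : Measure Ω) [IsProbabilityMeasure μ]
    (x : Ω → ℝ) (hx : Measurable x) (a t M : ℝ) (ha : 0 < a) (ht : 0 < t)
    (h : ∀ u, M ≤ u → (μ {ω | |x ω| > u}).toReal ≤ Real.exp (-(t * u ^ a))) :
    Integrable (fun ω => Real.exp (t / 2 * |x ω| ^ a)) μ := by
  have hg : Measurable fun ω => Real.exp (t / 2 * |x ω| ^ a) := by fun_prop
  have hgnn : ∀ ω, 0 ≤ Real.exp (t / 2 * |x ω| ^ a) := fun ω => (Real.exp_pos _).le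
  refine ⟨hg.aestronglyMeasurable, ?_⟩
  rw [hasFiniteIntegral_iff_ofReal (Filter.Eventually.of_forall hgnn)]
  rw [MeasureTheory.lintegral_eq_lintegral_meas_lt μ (Filter.Eventually.of_forall hgnn)
    hg.aemeasurable]
  set M' : ℝ := max M 1 with hM'
  have hM'1 : (1:ℝ) ≤ M' := le_max_right _ _
  have hM'0 : (0:ℝ) < M' := lt_of_lt_of_le one_pos hM'1
  set S : ℝ := Real.exp (t / 2 * M' ^ a) with hS
  have hS1 : (1:ℝ) ≤ S := Real.one_le_exp (by positivity)
  have hS0 : (0:ℝ) < S := lt_of_lt_of_le one_pos hS1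
  rw [← Set.Ioc_union_Ioi_eq_Ioi hS0.le,
    lintegral_union measurableSet_Ioi (Set.Ioc_disjoint_Ioi le_rfl)]
  have h1 : ∫⁻ s in Set.Ioc 0 S, μ {ω | s < Real.exp (t / 2 * |x ω| ^ a)} ≤
      ENNReal.ofReal S := by
    calc ∫⁻ s in Set.Ioc 0 S, μ {ω | s < Real.exp (t / 2 * |x ω| ^ a)}
        ≤ ∫⁻ _ in Set.Ioc 0 S, 1 :=
          setLIntegral_mono' measurableSet_Ioc fun s _ => prob_le_one
      _ = ENNReal.ofReal S := by simp [Real.volume_Ioc]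
  have h2 : ∫⁻ s in Set.Ioi S, μ {ω | s < Real.exp (t / 2 * |x ω| ^ a)} ≤
      ∫⁻ s in Set.Ioi S, ENNReal.ofReal (s ^ (-2 : ℝ)) := by
    refine setLIntegral_mono' measurableSet_Ioi fun s hs => ?_
    have hsS : S < s := hs
    have hs1 : (1:ℝ) < s := lt_of_le_of_lt hS1 hsS
    have hs0 : (0:ℝ) < s := lt_trans one_pos hs1
    have hlog : 0 < Real.log s := Real.log_pos hs1
    set u : ℝ := (2 / t * Real.log s) ^ (1 / a) with hu
    have hposarg : 0 < 2 / t * Real.log s := by positivity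
    have hu0 : 0 < u := Real.rpow_pos_of_pos hposarg _
    have hua : u ^ a = 2 / t * Real.log s := by
      rw [hu, ← Real.rpow_mul hposarg.le, one_div, inv_mul_cancel₀ ha.ne', Real.rpow_one]
    -- u ≥ M
    have hMu : M ≤ u := by
      have hlogS : t / 2 * M' ^ a ≤ Real.log s := by
        have := Real.log_le_log hS0 hsS.le
        rwa [hS, Real.log_exp] at this
      have hMa : M' ^ a ≤ u ^ a := by
        rw [hua]
        calc M' ^ a = 2 / t * (t / 2 * M' ^ a) := by field_simp
          _ ≤ 2 / t * Real.log s := by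
              apply mul_le_mul_of_nonneg_left hlogS (by positivity)
      exact le_trans (le_max_left M 1)
        ((Real.rpow_le_rpow_iff hM'0.le hu0.le ha).mp hMa)
    -- set inclusion
    have hsub : {ω | s < Real.exp (t / 2 * |x ω| ^ a)} ⊆ {ω | |x ω| > u} := by
      intro ω hω
      have h1' : Real.log s < t / 2 * |x ω| ^ a := by
        have := Real.log_lt_log hs0 hω
        rwa [Real.log_exp] at this
      have h2' : u ^ a < |x ω| ^ a := by
        rw [hua]
        calc 2 / t * Real.log s < 2 / t * (t / 2 * |x ω| ^ a) := by
              apply mul_lt_mul_of_pos_left h1' (by positivity)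
          _ = |x ω| ^ a := by field_simp
      by_contra hc
      simp only [Set.mem_setOf_eq, not_lt] at hc
      exact absurd (Real.rpow_le_rpow (abs_nonneg _) hc ha.le) (not_le.mpr h2')
    have htail' : (μ {ω | |x ω| > u}).toReal ≤ s ^ (-2 : ℝ) := by
      refine le_trans (h u hMu) ?_
      rw [Real.rpow_def_of_pos hs0]
      apply Real.exp_le_exp.2
      rw [hua]
      have : t * (2 / t * Real.log s) = 2 * Real.log s := by field_simp
      rw [this]; nlinarith [hlog]
    calc μ {ω | s < Real.exp (t / 2 * |x ω| ^ a)} ≤ μ {ω | |x ω| > u} := measure_mono hsub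
      _ = ENNReal.ofReal ((μ {ω | |x ω| > u}).toReal) :=
          (ENNReal.ofReal_toReal (measure_ne_top μ _)).symm
      _ ≤ ENNReal.ofReal (s ^ (-2 : ℝ)) := ENNReal.ofReal_le_ofReal htail'
  have h3 : ∫⁻ s in Set.Ioi S, ENNReal.ofReal (s ^ (-2 : ℝ)) < ⊤ :=
    (integrableOn_Ioi_rpow_of_lt (by norm_num) hS0).lintegral_lt_top
  exact lt_of_le_of_lt (add_le_add h1 h2)
    (ENNReal.add_lt_top.mpr ⟨ENNReal.ofReal_lt_top, lt_of_le_of_lt le_rfl h3⟩)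


lemma partB {Ω : Type*} [MeasurableSpace Ω] (μ : Measure Ω) [IsProbabilityMeasure μ]
    (x : Ω → ℝ) (C₀ β : ℝ) (hC₀ : 0 < C₀) (hβ0 : 0 < β) (hβ1 : β ≤ 1)
    (htail : ∀ p : ℕ → ℕ, Tendsto (fun n => (p n : ℝ)) atTop atTop →
      Tendsto (fun n => Real.log (p n) / (n : ℝ) ^ β) atTop (nhds 0) →
      Tendsto (fun n =>
          ((p n : ℝ)) ^ ((1 : ℝ) / 2) *
            (μ {ω | |x ω| > C₀ * ((n : ℝ) * Real.log (p n)) ^ ((1 : ℝ) / 4)}).toReal)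
        atTop (nhds 0))
    (hneg : ∀ t, 0 < t → ∀ M : ℝ, ∃ u, M ≤ u ∧
      Real.exp (-(t * u ^ (4 * β / (1 + β)))) < (μ {ω | |x ω| > u}).toReal) :
    False := by
  set a : ℝ := 4 * β / (1 + β) with ha_def
  have h1β : (0:ℝ) < 1 + β := by linarith
  have ha0 : 0 < a := div_pos (by linarith) h1β
  have ha2 : a ≤ 2 := by rw [ha_def, div_le_iff₀ h1β]; linarith
  have h4a : 2 ≤ 4 - a := by linarith
  have h4a0 : 0 < 4 - a := by linarith
  have hab : a / β = 4 - a := by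
    rw [ha_def]; field_simp; ring
  -- Step 1 : domination
  have hdom : ∀ k : ℕ, ∃ Mk : ℝ, ∀ u : ℝ, Mk ≤ u → 1 ≤ u →
      ((k:ℝ)+1) * u ^ (4 - a) / C₀^4 + 2 ≤ Real.exp (u ^ a / (2*((k:ℝ)+1))) / 2 := by
    intro k
    have hk1 : (0:ℝ) < (k:ℝ) + 1 := by positivity
    set c : ℝ := 1 / (2*((k:ℝ)+1)) with hc_def
    have hc : 0 < c := by positivity
    set D : ℝ := 2 * (((k:ℝ)+1)/C₀^4 + 2) with hD_def
    have key : Tendsto (fun u : ℝ => Real.exp (c * (u ^ a)) / (u ^ a) ^ (1/β)) atTop atTop :=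
      (tendsto_exp_mul_div_rpow_atTop (1/β) c hc).comp (tendsto_rpow_atTop ha0)
    obtain ⟨Mk, hMk⟩ := (key.eventually_ge_atTop D).exists_forall_of_atTop
    refine ⟨Mk, fun u hMu hu1 => ?_⟩
    have hu0 : (0:ℝ) < u := lt_of_lt_of_le one_pos hu1
    have hpow : (u ^ a) ^ (1/β) = u ^ (4 - a) := by
      rw [← Real.rpow_mul hu0.le, mul_one_div, hab]
    have h1 : D ≤ Real.exp (c * u ^ a) / u ^ (4 - a) := by
      have := hMk u hMu
      rwa [hpow] at this
    have hu4a : (0:ℝ) < u ^ (4 - a) := Real.rpow_pos_of_pos hu0 _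
    have hu4a1 : (1:ℝ) ≤ u ^ (4 - a) := Real.one_le_rpow hu1 h4a0.le
    have h2 : D * u ^ (4 - a) ≤ Real.exp (c * u ^ a) := (le_div_iff₀ hu4a).mp h1
    have hexp_eq : Real.exp (u ^ a / (2*((k:ℝ)+1))) = Real.exp (c * u ^ a) := by
      rw [hc_def]; ring_nf
    rw [hexp_eq, le_div_iff₀ (by norm_num : (0:ℝ) < 2)]
    have expand : D * u ^ (4-a) = 2 * (((k:ℝ)+1) * u ^ (4-a) / C₀^4) + 4 * u ^ (4-a) := by
      rw [hD_def]; field_simp; ring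
    nlinarith [h2, hu4a1]
  choose Mdom hMdom using hdom
  -- Step 2 : choose u_k
  have hstep : ∀ k : ℕ, ∃ u : ℝ,
      (Mdom k ≤ u ∧ 1 ≤ u ∧ C₀^2 ≤ u ∧ (16*((k:ℝ)+1)) ^ (1/a) ≤ u) ∧
      Real.exp (-((1/(8*((k:ℝ)+1))) * u ^ a)) < (μ {ω | |x ω| > u}).toReal := by
    intro k
    have hk1 : (0:ℝ) < (k:ℝ) + 1 := by positivity
    obtain ⟨u, hu1, hu2⟩ := hneg (1/(8*((k:ℝ)+1))) (by positivity)
      (max (Mdom k) (max 1 (max (C₀^2) ((16*((k:ℝ)+1)) ^ (1/a)))))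
    refine ⟨u, ⟨le_trans (le_max_left _ _) hu1,
      le_trans (le_trans (le_max_left _ _) (le_max_right _ _)) hu1,
      le_trans (le_trans (le_trans (le_max_left _ _) (le_max_right _ _)) (le_max_right _ _)) hu1,
      le_trans (le_trans (le_trans (le_max_right _ _) (le_max_right _ _)) (le_max_right _ _)) hu1⟩,
      hu2⟩
  choose u hu_ge hu_tail using hstep
  have hu1 : ∀ k : ℕ, 1 ≤ u k := fun k => (hu_ge k).2.1
  have hu0 : ∀ k : ℕ, 0 < u k := fun k => lt_of_lt_of_le one_pos (hu1 k)
  have huC : ∀ k : ℕ, C₀^4 ≤ (u k) ^ (4 - a) := by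
    intro k
    have h1 : C₀^4 ≤ (u k)^2 := by nlinarith [(hu_ge k).2.2.1, hu1 k, sq_nonneg (u k - C₀^2)]
    calc C₀^4 ≤ (u k)^2 := h1
      _ = (u k) ^ (2:ℝ) := by rw [← Real.rpow_natCast (u k) 2]; norm_num
      _ ≤ (u k) ^ (4-a) := Real.rpow_le_rpow_of_exponent_le (hu1 k) h4a
  have hu16 : ∀ k : ℕ, 16*((k:ℝ)+1) ≤ (u k) ^ a := by
    intro k
    have hb : (0:ℝ) < 16*((k:ℝ)+1) := by positivity
    have h := Real.rpow_le_rpow (Real.rpow_nonneg hb.le _) (hu_ge k).2.2.2 ha0.le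
    rwa [← Real.rpow_mul hb.le, one_div, inv_mul_cancel₀ ha0.ne', Real.rpow_one] at h
  set A : ℕ → ℝ := fun k => ((k:ℝ)+1) * (u k) ^ (4-a) / C₀^4 with hA_def
  have hA1 : ∀ k : ℕ, (k:ℝ)+1 ≤ A k := by
    intro k
    have h1 : 1 ≤ (u k)^(4-a)/C₀^4 := (one_le_div (by positivity)).mpr (huC k)
    calc (k:ℝ)+1 = ((k:ℝ)+1) * 1 := by ring
      _ ≤ ((k:ℝ)+1)*((u k)^(4-a)/C₀^4) :=
          mul_le_mul_of_nonneg_left h1 (by positivity)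
      _ = A k := by simp only [hA_def]; ring
  have hA0 : ∀ k : ℕ, 0 < A k := fun k => lt_of_lt_of_le (by positivity) (hA1 k)
  set n : ℕ → ℕ := fun k => ⌈A k⌉₊ with hn_def
  have hnA : ∀ k : ℕ, A k ≤ (n k : ℝ) := fun k => Nat.le_ceil _
  have hnA2 : ∀ k : ℕ, (n k : ℝ) ≤ A k + 1 := fun k => (Nat.ceil_lt_add_one (hA0 k).le).le
  have hn2A : ∀ k : ℕ, (n k:ℝ) ≤ 2 * A k := by
    intro k
    have hk0 : (0:ℝ) ≤ (k:ℝ) := Nat.cast_nonneg k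
    have h1 : (1:ℝ) ≤ A k := le_trans (by linarith) (hA1 k)
    linarith [hnA2 k]
  have hn0 : ∀ k : ℕ, (0:ℝ) < (n k:ℝ) := fun k => lt_of_lt_of_le (hA0 k) (hnA k)
  have hnk : ∀ k : ℕ, (k:ℝ)+1 ≤ (n k:ℝ) := fun k => (hA1 k).trans (hnA k)
  have hn1 : ∀ k : ℕ, (1:ℝ) ≤ (n k:ℝ) := fun k =>
    le_trans (by linarith [Nat.cast_nonneg (α := ℝ) k]) (hnk k)
  set L : ℕ → ℝ := fun k => (u k)^4 / (C₀^4 * (n k:ℝ)) - Real.log 2 with hL_def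
  have hu4 : ∀ k : ℕ, (u k)^4 = (u k)^a * (u k)^(4-a) := by
    intro k
    rw [← Real.rpow_natCast (u k) 4, ← Real.rpow_add (hu0 k)]
    norm_num
  have hL_low : ∀ k : ℕ, (u k)^a / (2*((k:ℝ)+1)) - Real.log 2 ≤ L k := by
    intro k
    have hden : 0 < C₀^4 * (n k:ℝ) := mul_pos (by positivity) (hn0 k)
    have h1 : C₀^4 * (n k:ℝ) ≤ 2*((k:ℝ)+1) * (u k)^(4-a) := by
      have h2 := hn2A k
      simp only [hA_def] at h2
      calc C₀^4 * (n k:ℝ) ≤ C₀^4 * (2 * (((k:ℝ)+1) * (u k)^(4-a)/C₀^4)) :=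
            mul_le_mul_of_nonneg_left h2 (by positivity)
        _ = 2*((k:ℝ)+1) * (u k)^(4-a) := by field_simp
    have h2 : (u k)^a / (2*((k:ℝ)+1)) ≤ (u k)^4 / (C₀^4 * (n k:ℝ)) := by
      rw [div_le_div_iff₀ (by positivity) hden, hu4 k]
      calc (u k)^a * (C₀^4 * (n k:ℝ)) ≤ (u k)^a * (2*((k:ℝ)+1) * (u k)^(4-a)) :=
            mul_le_mul_of_nonneg_left h1 (Real.rpow_nonneg (hu0 k).le _)
        _ = (u k)^a * (u k)^(4-a) * (2*((k:ℝ)+1)) := by ring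
    simp only [hL_def]
    linarith
  have hexpL : ∀ k : ℕ, (n k:ℝ) + 1 ≤ Real.exp (L k) := by
    intro k
    have hd := hMdom k (u k) (hu_ge k).1 (hu1 k)
    have h1 : Real.exp ((u k)^a/(2*((k:ℝ)+1)) - Real.log 2) ≤ Real.exp (L k) :=
      Real.exp_le_exp.2 (hL_low k)
    rw [Real.exp_sub, Real.exp_log two_pos] at h1
    have h2 : (n k:ℝ) + 1 ≤ ((k:ℝ)+1) * (u k)^(4-a)/C₀^4 + 2 := by
      have h3 := hnA2 k
      simp only [hA_def] at h3
      linarith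
    exact h2.trans (hd.trans h1)
  have hexpL2 : ∀ k : ℕ, (2:ℝ) ≤ Real.exp (L k) := fun k =>
    le_trans (by linarith [hn1 k]) (hexpL k)
  set P : ℕ → ℕ := fun k => ⌊Real.exp (L k)⌋₊ with hP_def
  have hP_low : ∀ k : ℕ, Real.exp (L k) / 2 ≤ (P k:ℝ) := by
    intro k
    have h1 := Nat.sub_one_lt_floor (Real.exp (L k))
    have h2 := hexpL2 k
    simp only [hP_def]
    linarith
  have hP_up : ∀ k : ℕ, (P k:ℝ) ≤ Real.exp (L k) := fun k => Nat.floor_le (Real.exp_pos _).le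
  set q : ℕ → ℕ := fun k => n k + P k with hq_def
  have hq_cast : ∀ k : ℕ, (q k : ℝ) = (n k:ℝ) + (P k:ℝ) := by
    intro k; simp only [hq_def]; push_cast; ring
  have hq_low : ∀ k : ℕ, Real.exp (L k)/2 ≤ (q k:ℝ) := by
    intro k; rw [hq_cast k]; linarith [hP_low k, (hn0 k).le]
  have hq_up : ∀ k : ℕ, (q k:ℝ) ≤ 2 * Real.exp (L k) := by
    intro k; rw [hq_cast k]; linarith [hexpL k, hP_up k]
  have hq1 : ∀ k : ℕ, (1:ℝ) ≤ (q k:ℝ) := fun k => le_trans (by linarith [hexpL2 k]) (hq_low k)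
  have hq0 : ∀ k : ℕ, (0:ℝ) < (q k:ℝ) := fun k => lt_of_lt_of_le one_pos (hq1 k)
  have hlogq : ∀ k : ℕ, Real.log (q k) ≤ (u k)^4 / (C₀^4 * (n k:ℝ)) := by
    intro k
    have h1 : Real.log (q k) ≤ Real.log (2 * Real.exp (L k)) :=
      Real.log_le_log (hq0 k) (hq_up k)
    rw [Real.log_mul two_ne_zero (Real.exp_ne_zero _), Real.log_exp] at h1
    simp only [hL_def] at h1
    linarith
  -- threshold bound
  have hthr : ∀ k : ℕ, C₀ * ((n k:ℝ) * Real.log (q k)) ^ ((1:ℝ)/4) ≤ u k := by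
    intro k
    have h1 : (n k:ℝ) * Real.log (q k) ≤ (u k)^4 / C₀^4 := by
      have h0 := hlogq k
      calc (n k:ℝ) * Real.log (q k) ≤ (n k:ℝ) * ((u k)^4/(C₀^4 * (n k:ℝ))) :=
          mul_le_mul_of_nonneg_left h0 (hn0 k).le
        _ = (u k)^4 / C₀^4 := by
            have hne : (n k:ℝ) ≠ 0 := (hn0 k).ne'
            field_simp
    have hnn : 0 ≤ (n k:ℝ) * Real.log (q k) :=
      mul_nonneg (hn0 k).le (Real.log_nonneg (hq1 k))
    have h3 : ((n k:ℝ) * Real.log (q k)) ^ ((1:ℝ)/4) ≤ ((u k)^4/C₀^4) ^ ((1:ℝ)/4) :=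
      Real.rpow_le_rpow hnn h1 (by norm_num)
    have h4 : ((u k)^4/C₀^4) ^ ((1:ℝ)/4) = u k / C₀ := by
      have h5 : (u k)^4/C₀^4 = (u k / C₀)^4 := by
        field_simp
      rw [h5, ← Real.rpow_natCast (u k / C₀) 4,
        ← Real.rpow_mul (div_nonneg (hu0 k).le hC₀.le)]
      norm_num
    calc C₀ * ((n k:ℝ)*Real.log (q k))^((1:ℝ)/4) ≤ C₀ * (u k / C₀) :=
          mul_le_mul_of_nonneg_left (h3.trans_eq h4) hC₀.le
      _ = u k := by field_simp
  -- product lower bound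
  have hprod : ∀ k : ℕ, 1 ≤ (q k:ℝ) ^ ((1:ℝ)/2) *
      (μ {ω | |x ω| > C₀ * ((n k:ℝ) * Real.log (q k)) ^ ((1:ℝ)/4)}).toReal := by
    intro k
    have hk1 : (0:ℝ) < (k:ℝ)+1 := by positivity
    have hsub : {ω | |x ω| > u k} ⊆
        {ω | |x ω| > C₀ * ((n k:ℝ) * Real.log (q k)) ^ ((1:ℝ)/4)} :=
      fun ω hω => lt_of_le_of_lt (hthr k) hω
    have htailk : Real.exp (-((1/(8*((k:ℝ)+1))) * (u k) ^ a)) ≤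
        (μ {ω | |x ω| > C₀ * ((n k:ℝ) * Real.log (q k)) ^ ((1:ℝ)/4)}).toReal :=
      le_trans (hu_tail k).le (ENNReal.toReal_mono (measure_ne_top μ _) (measure_mono hsub))
    have hq_half : Real.exp (L k / 2 - Real.log 2) ≤ (q k:ℝ) ^ ((1:ℝ)/2) := by
      have h2 : (Real.exp (L k)/2) ^ ((1:ℝ)/2) ≤ (q k:ℝ)^((1:ℝ)/2) :=
        Real.rpow_le_rpow (by positivity) (hq_low k) (by norm_num)
      refine le_trans ?_ h2
      rw [Real.div_rpow (Real.exp_pos _).le (by norm_num : (0:ℝ) ≤ 2),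
        ← Real.exp_one_rpow (L k), ← Real.rpow_mul (Real.exp_pos 1).le, Real.exp_one_rpow,
        Real.exp_sub, Real.exp_log two_pos]
      have h8 : L k / 2 = L k * (1/2) := by ring
      rw [h8]
      have h6 : (2:ℝ) ^ ((1:ℝ)/2) ≤ 2 := by
        calc (2:ℝ) ^ ((1:ℝ)/2) ≤ (2:ℝ) ^ (1:ℝ) :=
            Real.rpow_le_rpow_of_exponent_le one_le_two (by norm_num)
          _ = 2 := Real.rpow_one 2
      have h7 : (0:ℝ) < (2:ℝ) ^ ((1:ℝ)/2) := by positivity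
      gcongr
    have hexp9 : (0:ℝ) ≤ L k/2 - Real.log 2 - (1/(8*((k:ℝ)+1))) * (u k)^a := by
      have hlog2 : Real.log 2 ≤ 1 := by
        have h1 := Real.log_le_sub_one_of_pos (by norm_num : (0:ℝ) < 2)
        linarith
      have hL := hL_low k
      have h16 := hu16 k
      have hkne : ((k:ℝ)+1) ≠ 0 := hk1.ne'
      have hm : (0:ℝ) < 8*((k:ℝ)+1) := by positivity
      have h2' : (2:ℝ) ≤ (u k)^a / (8*((k:ℝ)+1)) := by
        rw [le_div_iff₀ hm]; linarith
      have e1 : (u k)^a/(2*((k:ℝ)+1)) = 4 * ((u k)^a/(8*((k:ℝ)+1))) := by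
        field_simp
        ring
      have e2 : (1/(8*((k:ℝ)+1))) * (u k)^a = (u k)^a/(8*((k:ℝ)+1)) := by
        ring
      rw [e2]
      rw [e1] at hL
      linarith
    calc (1:ℝ) = Real.exp 0 := Real.exp_zero.symm
      _ ≤ Real.exp ((L k/2 - Real.log 2) + (-((1/(8*((k:ℝ)+1))) * (u k)^a))) :=
          Real.exp_le_exp.2 (by linarith [hexp9])
      _ = Real.exp (L k/2 - Real.log 2) * Real.exp (-((1/(8*((k:ℝ)+1))) * (u k)^a)) :=
          Real.exp_add _ _
      _ ≤ _ := mul_le_mul hq_half htailk (Real.exp_pos _).le (Real.rpow_nonneg (hq0 k).le _)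
  -- ratio bound
  have hratio : ∀ k : ℕ, Real.log (q k) ≤ (C₀^4)^β * (n k:ℝ)^β / (((k:ℝ)+1)^(β+1)) := by
    intro k
    have hk1 : (0:ℝ) < (k:ℝ)+1 := by positivity
    have h1 : Real.log (q k) ≤ (u k)^a / ((k:ℝ)+1) := by
      have h2 := hlogq k
      have h3 : (u k)^4 / (C₀^4 * (n k:ℝ)) ≤ (u k)^a / ((k:ℝ)+1) := by
        rw [div_le_div_iff₀ (mul_pos (by positivity) (hn0 k)) hk1, hu4 k]
        have h4 : ((k:ℝ)+1) * (u k)^(4-a) ≤ C₀^4 * (n k:ℝ) := by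
          have h5 := hnA k
          simp only [hA_def] at h5
          calc ((k:ℝ)+1) * (u k)^(4-a) = C₀^4 * (((k:ℝ)+1) * (u k)^(4-a) / C₀^4) := by
                field_simp
            _ ≤ C₀^4 * (n k:ℝ) := mul_le_mul_of_nonneg_left h5 (by positivity)
        calc (u k)^a * (u k)^(4-a) * ((k:ℝ)+1) = (u k)^a * (((k:ℝ)+1) * (u k)^(4-a)) := by ring
          _ ≤ (u k)^a * (C₀^4 * (n k:ℝ)) :=
              mul_le_mul_of_nonneg_left h4 (Real.rpow_nonneg (hu0 k).le _)
      exact h2.trans h3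
    have h6 : (u k)^a ≤ (C₀^4)^β * (n k:ℝ)^β / (((k:ℝ)+1)^β) := by
      have h7 : (u k)^(4-a) ≤ C₀^4 * (n k:ℝ) / ((k:ℝ)+1) := by
        have h5 := hnA k
        simp only [hA_def] at h5
        rw [le_div_iff₀ hk1]
        calc (u k)^(4-a) * ((k:ℝ)+1) = C₀^4 * (((k:ℝ)+1) * (u k)^(4-a) / C₀^4) := by
              field_simp
          _ ≤ C₀^4 * (n k:ℝ) := mul_le_mul_of_nonneg_left h5 (by positivity)
      have h8 : ((u k)^(4-a))^β ≤ (C₀^4 * (n k:ℝ) / ((k:ℝ)+1))^β :=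
        Real.rpow_le_rpow (Real.rpow_nonneg (hu0 k).le _) h7 hβ0.le
      have h9 : ((u k)^(4-a))^β = (u k)^a := by
        rw [← Real.rpow_mul (hu0 k).le]
        congr 1
        field_simp at hab ⊢
        linarith [hab]
      have h10 : (C₀^4 * (n k:ℝ) / ((k:ℝ)+1))^β =
          (C₀^4)^β * (n k:ℝ)^β / (((k:ℝ)+1)^β) := by
        rw [Real.div_rpow (mul_nonneg (by positivity) (hn0 k).le) hk1.le,
          Real.mul_rpow (by positivity) (hn0 k).le]
      rw [h9, h10] at h8
      exact h8
    have h11 : (u k)^a / ((k:ℝ)+1) ≤ (C₀^4)^β * (n k:ℝ)^β / (((k:ℝ)+1)^(β+1)) := by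
      have h12 : ((k:ℝ)+1)^(β+1) = ((k:ℝ)+1)^β * ((k:ℝ)+1) := by
        rw [Real.rpow_add hk1, Real.rpow_one]
      rw [h12, ← div_div]
      gcongr
    exact h1.trans h11
  -- define the sequence p
  classical
  set p : ℕ → ℕ := fun m => if h : ∃ k, n k = m then q (Classical.choose h) else m
    with hp_def
  have hp_pos : ∀ m : ℕ, (h : ∃ k, n k = m) → p m = q (Classical.choose h) := by
    intro m h
    simp only [hp_def, dif_pos h]
  have hp_neg : ∀ m : ℕ, ¬(∃ k, n k = m) → p m = m := by
    intro m h
    simp only [hp_def, dif_neg h]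
  have hp_ge : ∀ m : ℕ, m ≤ p m := by
    intro m
    by_cases h : ∃ k, n k = m
    · rw [hp_pos m h]
      have hj := Classical.choose_spec h
      calc m = n (Classical.choose h) := hj.symm
        _ ≤ q (Classical.choose h) := Nat.le_add_right _ _
    · rw [hp_neg m h]
  have hp1 : Tendsto (fun m => ((p m : ℕ) : ℝ)) atTop atTop := by
    apply tendsto_atTop_mono (fun m => ?_) tendsto_natCast_atTop_atTop
    exact_mod_cast hp_ge m
  have hp2 : Tendsto (fun m => Real.log (p m) / (m:ℝ)^β) atTop (nhds 0) := by
    rw [Metric.tendsto_atTop]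
    intro ε hε
    have hfill : Tendsto (fun m : ℕ => Real.log (m:ℝ) / (m:ℝ)^β) atTop (nhds 0) :=
      ((isLittleO_log_rpow_atTop hβ0).tendsto_div_nhds_zero).comp tendsto_natCast_atTop_atTop
    obtain ⟨N₂, hN₂⟩ := (Metric.tendsto_atTop.mp hfill) ε hε
    have hK : Tendsto (fun k : ℕ => (C₀^4)^β / (((k:ℝ)+1)^(β+1))) atTop (nhds 0) := by
      apply Tendsto.div_atTop tendsto_const_nhds
      exact (tendsto_rpow_atTop (by linarith : (0:ℝ) < β + 1)).comp
        (tendsto_atTop_add_const_right atTop (1:ℝ) tendsto_natCast_atTop_atTop)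
    obtain ⟨K₀, hK₀⟩ := (Metric.tendsto_atTop.mp hK) ε hε
    refine ⟨max (max (((Finset.range K₀).sup n) + 1) N₂) 1, fun m hm => ?_⟩
    have hm1 : 1 ≤ m := le_trans (le_max_right _ _) hm
    have hmN₁ : ((Finset.range K₀).sup n) + 1 ≤ m :=
      le_trans (le_trans (le_max_left _ _) (le_max_left _ _)) hm
    have hmN₂ : N₂ ≤ m := le_trans (le_trans (le_max_right _ _) (le_max_left _ _)) hm
    by_cases h : ∃ k, n k = m
    · have hj : n (Classical.choose h) = m := Classical.choose_spec h
      have hpm : p m = q (Classical.choose h) := hp_pos m h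
      set j := Classical.choose h with hj_def
      have hjK : K₀ ≤ j := by
        by_contra hc
        push_neg at hc
        have h1 : n j ≤ (Finset.range K₀).sup n := Finset.le_sup (Finset.mem_range.mpr hc)
        omega
      have hdist := hK₀ j hjK
      rw [Real.dist_eq, sub_zero] at hdist
      have habs : (C₀^4)^β/(((j:ℝ)+1)^(β+1)) < ε := lt_of_abs_lt hdist
      have hval : Real.log (p m) / (m:ℝ)^β ≤ (C₀^4)^β/(((j:ℝ)+1)^(β+1)) := by
        rw [hpm, ← hj]
        have h1 := hratio j
        have hnb : (0:ℝ) < (n j:ℝ)^β := Real.rpow_pos_of_pos (hn0 j) _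
        rw [div_le_iff₀ hnb]
        calc Real.log (q j) ≤ (C₀^4)^β * (n j:ℝ)^β / (((j:ℝ)+1)^(β+1)) := h1
          _ = (C₀^4)^β/(((j:ℝ)+1)^(β+1)) * (n j:ℝ)^β := by ring
      have hnonneg : 0 ≤ Real.log (p m) / (m:ℝ)^β := by
        apply div_nonneg _ (Real.rpow_nonneg (Nat.cast_nonneg m) _)
        apply Real.log_nonneg
        have : 1 ≤ p m := le_trans hm1 (hp_ge m)
        exact_mod_cast this
      rw [Real.dist_eq, sub_zero, abs_of_nonneg hnonneg]
      exact lt_of_le_of_lt hval habs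
    · have hpm : p m = m := hp_neg m h
      have h1 := hN₂ m hmN₂
      rw [hpm]
      exact h1
  -- contradiction
  have hT := htail p hp1 hp2
  obtain ⟨N, hN⟩ := (Metric.tendsto_atTop.mp hT) 1 one_pos
  have hmN : N ≤ n N := by
    have h := hnk N
    have h2 : (N:ℝ) ≤ (n N:ℝ) := by linarith
    exact_mod_cast h2
  have hd := hN (n N) hmN
  rw [Real.dist_eq, sub_zero] at hd
  have h1 : ((p (n N) : ℕ):ℝ)^((1:ℝ)/2) *
      (μ {ω | |x ω| > C₀*(((n N : ℕ):ℝ)*Real.log (p (n N)))^((1:ℝ)/4)}).toReal < 1 :=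
    lt_of_abs_lt hd
  have hex : ∃ k, n k = n N := ⟨N, rfl⟩
  have hj : n (Classical.choose hex) = n N := Classical.choose_spec hex
  have hpm : p (n N) = q (Classical.choose hex) := hp_pos (n N) hex
  have h2 : (1:ℝ) ≤ ((q (Classical.choose hex) : ℕ):ℝ)^((1:ℝ)/2) *
      (μ {ω | |x ω| > C₀*(((n N : ℕ):ℝ)*Real.log (q (Classical.choose hex)))^((1:ℝ)/4)}).toReal := by
    have h3 := hprod (Classical.choose hex)
    rw [hj] at h3
    exact h3
  rw [hpm] at h1
  exact absurd h1 (not_lt.mpr h2)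

theorem tail_decay_implies_exp_moment
    {Ω : Type*} [MeasurableSpace Ω] (μ : Measure Ω) [IsProbabilityMeasure μ]
    (x : Ω → ℝ) (hmeas : Measurable x)
    (C₀ β : ℝ) (hC₀ : C₀ > 0) (hβ : β ∈ Set.Ioc (0 : ℝ) 1)
    (htail : ∀ p : ℕ → ℕ, Tendsto (fun n => (p n : ℝ)) atTop atTop →
      Tendsto (fun n => Real.log (p n) / (n : ℝ) ^ β) atTop (nhds 0) →
      Tendsto (fun n =>
          ((p n : ℝ)) ^ ((1 : ℝ) / 2) *
            (μ {ω | |x ω| > C₀ * ((n : ℝ) * Real.log (p n)) ^ ((1 : ℝ) / 4)}).toReal)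
        atTop (nhds 0)) :
    ∃ t₀ : ℝ, t₀ > 0 ∧
      Integrable (fun ω => Real.exp (t₀ * |x ω| ^ (4 * β / (1 + β)))) μ := by
  obtain ⟨hβ0, hβ1⟩ := hβ
  have ha0 : 0 < 4 * β / (1 + β) := div_pos (by linarith) (by linarith)
  by_cases hbd : ∃ t, 0 < t ∧ ∃ M : ℝ, ∀ u, M ≤ u →
      (μ {ω | |x ω| > u}).toReal ≤ Real.exp (-(t * u ^ (4 * β / (1 + β))))
  · obtain ⟨t, ht, M, hM⟩ := hbd
    exact ⟨t / 2, by positivity, partA μ x hmeas _ t M ha0 ht hM⟩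
  · exfalso
    have hneg : ∀ t, 0 < t → ∀ M : ℝ, ∃ u, M ≤ u ∧
        Real.exp (-(t * u ^ (4 * β / (1 + β)))) < (μ {ω | |x ω| > u}).toReal := by
      intro t ht M
      by_contra hc
      push_neg at hc
      exact hbd ⟨t, ht, M, fun u hu => hc u hu⟩
    exact partB μ x C₀ β hC₀ hβ0 hβ1 htail hneg
end
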